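/- arXiv:2306.07886 — 4 statements merged into one kernel-verified Lean document; each statement's English description precedes it below -/
import Mathlib

section
/- For any t ∈ ℝ and d ≥ 2, the matrix C₅ₜ(d) = I_{d-2} ⊕ [[(1-t³)^{1/3}, 0],[t, 0]] ∈ M(d,d) satisfies φ(C₅ₜ(d)) = 1, where φ(W) = ‖∑ᵢ wᵢ^{⊗3} − ∑ᵢ eᵢ^{⊗3}‖²_F and wᵢ denotes the i-th row of W. -/
/-- Real cube root. -/
noncomputable def cbrt (x : ℝ) : ℝ :=
  if 0 ≤ x then x ^ ((1:ℝ)/3) else -((-x) ^ ((1:ℝ)/3))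

lemma cbrt_cube (x : ℝ) : cbrt x ^ 3 = x := by
  unfold cbrt; split_ifs with h
  · rw [← Real.rpow_natCast (x ^ ((1:ℝ)/3)) 3, ← Real.rpow_mul h]; norm_num
  · rw [neg_pow]
    rw [← Real.rpow_natCast ((-x) ^ ((1:ℝ)/3)) 3, ← Real.rpow_mul (by linarith)]
    norm_num

/-- Frobenius loss `φ(W) = ∑_{i,j} ⟨wᵢ,wⱼ⟩³ − 2∑_{i,j} ⟨wᵢ,eⱼ⟩³ + d`. -/
noncomputable def phi (d : ℕ) (W : Fin d → Fin d → ℝ) : ℝ :=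
  (∑ i, ∑ j, (∑ k, W i k * W j k) ^ 3) - 2 * ∑ i, ∑ j, (W i j) ^ 3 + d

/-- The matrix `C₅ₜ(d) = I_{d-2} ⊕ [[(1-t³)^{1/3}, 0],[t, 0]]`. -/
noncomputable def C5 (d : ℕ) (t : ℝ) : Fin d → Fin d → ℝ := fun i j =>
  if (i : ℕ) < d - 2 then (if i = j then 1 else 0)
  else if (i : ℕ) = d - 2 then (if (j : ℕ) = d - 2 then cbrt (1 - t ^ 3) else 0)
  else (if (j : ℕ) = d - 2 then t else 0)

lemma key (m : ℕ) (t : ℝ) : phi (m+2) (C5 (m+2) t) = 1 := by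
  have h1 : ¬ (m + 1 < m) := by omega
  have h2 : m + 1 ≠ m := by omega
  have h3 : ∀ x : Fin m, (x : ℕ) ≠ m := fun x => Nat.ne_of_lt x.isLt
  have h4 : ∀ x : Fin m, (x : ℕ) ≠ m + 1 := fun x => by omega
  simp only [phi, C5, Fin.sum_univ_castSucc, Fin.coe_castSucc, Fin.val_last,
    Nat.add_sub_cancel, Fin.is_lt, if_true, lt_self_iff_false, if_false,
    h1, h2, h3, h4, Fin.ext_iff]
  simp only [Fin.val_inj, mul_zero, zero_mul, mul_one, one_mul, add_zero, zero_add,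
    mul_ite, ite_mul, Finset.sum_const_zero, Finset.sum_ite_eq, Finset.mem_univ, if_true]
  simp only [apply_ite (· ^ (3:ℕ)), one_pow, zero_pow (three_ne_zero), Finset.sum_ite_eq,
    Finset.mem_univ, if_true, add_zero, zero_add, Finset.sum_const, Finset.card_univ,
    Fintype.card_fin, nsmul_eq_mul, mul_one, mul_pow]
  rw [cbrt_cube]
  push_cast
  ring

theorem stmt0 (d : ℕ) (hd : 2 ≤ d) (t : ℝ) : phi d (C5 d t) = 1 := by
  obtain ⟨m, rfl⟩ : ∃ m, d = m + 2 := ⟨d - 2, by omega⟩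
  exact key m t
end

section
/- Let k: ℝ^d × ℝ^d → ℝ be a symmetric, permutation-invariant kernel (k(σw,σv)=k(w,v) for all σ ∈ S_d). Fix V ∈ M(h,d), β ∈ ℝ^h, α ∈ ℝ^k, and define L(W) = ∑_{i,j} αᵢαⱼ k(wᵢ,wⱼ) − 2∑_{i,j} αᵢβⱼ k(wᵢ,vⱼ) + ∑_{i,j} βᵢβⱼ k(vᵢ,vⱼ). Then L(σW) = L(W) for all σ = (σ₁,σ₂) ∈ (S_k)_α × G, where G = π₂((S_h×S_d)_V ∩ ((S_h)_β × S_d)), σ₁ permutes rows of W, and σ₂ permutes columns of W. -/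
theorem stmt5 (K h d : ℕ) (κ : (Fin d → ℝ) → (Fin d → ℝ) → ℝ)
    (hsym : ∀ w v, κ w v = κ v w)
    (hperm : ∀ (σ : Equiv.Perm (Fin d)) (w v : Fin d → ℝ),
      κ (fun i => w (σ.symm i)) (fun i => v (σ.symm i)) = κ w v)
    (V : Fin h → Fin d → ℝ) (β : Fin h → ℝ) (α : Fin K → ℝ)
    (L : (Fin K → Fin d → ℝ) → ℝ)
    (hL : ∀ W, L W =
      (∑ i, ∑ j, α i * α j * κ (W i) (W j))
      - 2 * ∑ i, ∑ j, α i * β j * κ (W i) (V j)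
      + ∑ i, ∑ j, β i * β j * κ (V i) (V j))
    (σ₁ : Equiv.Perm (Fin K)) (σ₂ : Equiv.Perm (Fin d))
    (hσ₁ : ∀ i, α (σ₁.symm i) = α i)
    (hσ₂ : ∃ ρ : Equiv.Perm (Fin h),
      (∀ i, β (ρ.symm i) = β i) ∧ (∀ i j, V (ρ.symm i) (σ₂.symm j) = V i j))
    (W : Fin K → Fin d → ℝ) :
    L (fun i j => W (σ₁.symm i) (σ₂.symm j)) = L W := by
  obtain ⟨ρ, hβ, hV⟩ := hσ₂
  rw [hL, hL]
  congr 1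
  congr 1
  · calc ∑ i, ∑ j, α i * α j * κ (fun l => W (σ₁.symm i) (σ₂.symm l))
          (fun l => W (σ₁.symm j) (σ₂.symm l))
        = ∑ i, ∑ j, α (σ₁.symm i) * α (σ₁.symm j) * κ (W (σ₁.symm i)) (W (σ₁.symm j)) := by
          simp only [hperm σ₂, hσ₁]
      _ = ∑ i, ∑ j, α i * α j * κ (W i) (W j) := by
          rw [Fintype.sum_equiv σ₁.symm _ (fun i => ∑ j, α i * α j * κ (W i) (W j))]
          intro i
          exact Fintype.sum_equiv σ₁.symm _ _ (fun j => rfl)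
  · congr 1
    calc ∑ i, ∑ j, α i * β j * κ (fun l => W (σ₁.symm i) (σ₂.symm l)) (V j)
        = ∑ i, ∑ j, α (σ₁.symm i) * β (ρ.symm j) * κ (W (σ₁.symm i)) (V (ρ.symm j)) := by
          refine Finset.sum_congr rfl fun i _ => Finset.sum_congr rfl fun j _ => ?_
          have : V j = fun l => V (ρ.symm j) (σ₂.symm l) := by
            funext l; rw [hV]
          rw [this, hperm σ₂, hσ₁, hβ]
      _ = ∑ i, ∑ j, α i * β j * κ (W i) (V j) := by
          rw [Fintype.sum_equiv σ₁.symm _ (fun i => ∑ j, α i * β j * κ (W i) (V j))]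
          intro i
          exact Fintype.sum_equiv ρ.symm _ _ (fun j => rfl)
end

section
/- For d ≥ 2 and 1 ≤ i < d, the matrix W = I_{d-i} ⊕ O_i (identity block plus an i×i zero block) is a critical point of the Frobenius loss φ with φ(W) = i, and the curve γ(t) = I_{d-i} ⊕ [t] ⊕ O_{i-1} satisfies φ(γ(t)) = t⁶ − 2t³ + i; hence W is a saddle (not a local minimum). -/
/-- The matrix `I_{d-i} ⊕ O_i`. -/
def idZero (d i : ℕ) : Fin d → Fin d → ℝ := fun a b =>
  if a = b ∧ (a : ℕ) < d - i then 1 else 0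

/-- The radial curve `γ(t) = I_{d-i} ⊕ [t] ⊕ O_{i-1}`. -/
def idZeroCurve (d i : ℕ) (t : ℝ) : Fin d → Fin d → ℝ := fun a b =>
  if a = b ∧ (a : ℕ) < d - i then 1
  else if a = b ∧ (a : ℕ) = d - i then t else 0

open Finset Filter Topology

variable {d : ℕ}

def gram (W : Fin d → Fin d → ℝ) (a c : Fin d) : ℝ := ∑ k, W a k * W c k

lemma gram_comm (W : Fin d → Fin d → ℝ) (a c : Fin d) : gram W a c = gram W c a := by
  simp only [gram, mul_comm]

lemma phi_eq_gram (W : Fin d → Fin d → ℝ) :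
    phi d W = ∑ a, ∑ c, gram W a c ^ 3 - 2 * ∑ a, ∑ b, W a b ^ 3 + d := rfl

/-- In matrix notation `phiGrad W = 6 ((W Wᵀ)^{∘2} W - W^{∘2})`, with `∘` the Hadamard power. -/
noncomputable def phiGrad (W : Fin d → Fin d → ℝ) (a b : Fin d) : ℝ :=
  6 * (∑ c, gram W a c ^ 2 * W c b - W a b ^ 2)

noncomputable def entryCLM (a b : Fin d) : (Fin d → Fin d → ℝ) →L[ℝ] ℝ :=
  (ContinuousLinearMap.proj b).comp
    (ContinuousLinearMap.proj (R := ℝ) (φ := fun _ : Fin d => Fin d → ℝ) a)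

@[simp]
lemma entryCLM_apply (a b : Fin d) (H : Fin d → Fin d → ℝ) : entryCLM a b H = H a b := rfl

lemma hasFDerivAt_gram (W : Fin d → Fin d → ℝ) (a c : Fin d) :
    HasFDerivAt (fun V => gram V a c) (∑ k, (W a k • entryCLM c k + W c k • entryCLM a k)) W :=
  HasFDerivAt.fun_sum fun k _ => (entryCLM a k).hasFDerivAt.fun_mul (entryCLM c k).hasFDerivAt

lemma sum_gram_sq_mul_sum_eq (W H : Fin d → Fin d → ℝ) :
    ∑ a, ∑ c, 3 * gram W a c ^ 2 * ∑ k, (W a k * H c k + W c k * H a k) =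
      ∑ a, ∑ k, 6 * (∑ c, gram W a c ^ 2 * W c k) * H a k := by
  have hswap : ∑ a, ∑ c, gram W a c ^ 2 * ∑ k, W a k * H c k =
      ∑ a, ∑ c, gram W a c ^ 2 * ∑ k, W c k * H a k := by
    rw [sum_comm]; simp only [gram_comm W]
  have hcontract : ∀ a, ∑ c, gram W a c ^ 2 * ∑ k, W c k * H a k =
      ∑ k, (∑ c, gram W a c ^ 2 * W c k) * H a k := fun a => by
    simp_rw [mul_sum, sum_mul, mul_assoc]; exact sum_comm
  calc _ = 3 * ∑ a, ∑ c, gram W a c ^ 2 * ∑ k, W a k * H c k +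
        3 * ∑ a, ∑ c, gram W a c ^ 2 * ∑ k, W c k * H a k := by
          simp only [sum_add_distrib, mul_add, mul_sum, mul_assoc]
    _ = 6 * ∑ a, ∑ c, gram W a c ^ 2 * ∑ k, W c k * H a k := by rw [hswap]; ring
    _ = _ := by
      rw [mul_sum]
      refine sum_congr rfl fun a _ => ?_
      rw [hcontract, mul_sum]
      simp only [mul_assoc]

lemma hasFDerivAt_phi (W : Fin d → Fin d → ℝ) :
    HasFDerivAt (phi d) (∑ a, ∑ b, phiGrad W a b • entryCLM a b) W := by
  have hgram : HasFDerivAt (fun V => ∑ a, ∑ c, gram V a c ^ 3) _ W :=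
    HasFDerivAt.fun_sum fun a _ => HasFDerivAt.fun_sum fun c _ => (hasFDerivAt_gram W a c).pow 3
  have hentry : HasFDerivAt (fun V : Fin d → Fin d → ℝ => ∑ a, ∑ b, V a b ^ 3) _ W :=
    HasFDerivAt.fun_sum fun a _ => HasFDerivAt.fun_sum fun b _ => (entryCLM a b).hasFDerivAt.pow 3
  refine ((hgram.sub (hentry.const_mul 2)).add_const (d : ℝ)).congr_fderiv
    (ContinuousLinearMap.ext fun H => ?_)
  simp only [Nat.add_one_sub_one, nsmul_eq_mul, Nat.cast_ofNat, entryCLM_apply, _root_.sub_apply,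
    _root_.sum_apply, _root_.smul_apply, _root_.add_apply, smul_eq_mul]
  rw [sum_gram_sq_mul_sum_eq]
  simp only [phiGrad, mul_sub, sub_mul, sum_sub_distrib, mul_sum]
  ring_nf

lemma fderiv_phi_eq_zero {W : Fin d → Fin d → ℝ} (hW : phiGrad W = 0) :
    fderiv ℝ (phi d) W = 0 := by
  simp [(hasFDerivAt_phi W).fderiv, hW]

def diagonalFn (δ : Fin d → ℝ) : Fin d → Fin d → ℝ := fun a b => if a = b then δ a else 0

lemma gram_diagonalFn (δ : Fin d → ℝ) (a c : Fin d) :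
    gram (diagonalFn δ) a c = if a = c then δ a ^ 2 else 0 := by
  by_cases h : a = c <;> simp [gram, diagonalFn, ite_mul, h, sq]

lemma phi_diagonalFn (δ : Fin d → ℝ) :
    phi d (diagonalFn δ) = ∑ a, (δ a ^ 6 - 2 * δ a ^ 3) + d := by
  rw [phi_eq_gram]
  simp [gram_diagonalFn, diagonalFn, ite_pow, sum_sub_distrib, mul_sum, ← pow_mul]

lemma phiGrad_diagonalFn (δ : Fin d → ℝ) :
    phiGrad (diagonalFn δ) = diagonalFn fun a => 6 * (δ a ^ 5 - δ a ^ 2) := by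
  ext a b
  by_cases h : a = b <;> simp [phiGrad, gram_diagonalFn, diagonalFn, h, ← pow_mul, ← pow_succ]

lemma phiGrad_diagonalFn_eq_zero {δ : Fin d → ℝ} (hδ : ∀ a, δ a = 0 ∨ δ a = 1) :
    phiGrad (diagonalFn δ) = 0 := by
  ext a b
  rw [phiGrad_diagonalFn]
  rcases hδ a with h | h <;> simp [diagonalFn, h]

lemma sum_fin_ite_lt_ite_eq {M : Type*} [AddCommMonoid M] {m : ℕ} (hm : m < d) (x y : M) :
    ∑ a : Fin d, (if (a : ℕ) < m then x else if (a : ℕ) = m then y else 0) = m • x + y := by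
  obtain ⟨r, rfl⟩ : ∃ r, d = m + 1 + r := ⟨d - (m + 1), by omega⟩
  rw [Fin.sum_univ_eq_sum_range (fun k => if k < m then x else if k = m then y else 0),
    sum_range_add, sum_range_succ, sum_congr rfl fun k hk => if_pos (mem_range.1 hk)]
  have htail : ∀ k ∈ range r, (if m + 1 + k < m then x else if m + 1 + k = m then y else 0) = 0 :=
    fun k _ => by rw [if_neg (by omega), if_neg (by omega)]
  simp [sum_eq_zero htail]

lemma idZeroCurve_eq_diagonalFn (d i : ℕ) (t : ℝ) :
    idZeroCurve d i t =
      diagonalFn fun a : Fin d => if (a : ℕ) < d - i then 1 else if (a : ℕ) = d - i then t else 0 := by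
  ext a b
  by_cases h : a = b <;> simp [idZeroCurve, diagonalFn, h]

lemma idZeroCurve_zero (d i : ℕ) : idZeroCurve d i 0 = idZero d i := by
  ext a b
  unfold idZeroCurve idZero
  split_ifs <;> rfl

lemma continuous_idZeroCurve (d i : ℕ) : Continuous (idZeroCurve d i) := by
  refine continuous_pi fun a => continuous_pi fun b => ?_
  unfold idZeroCurve
  split_ifs <;> fun_prop

lemma phi_idZeroCurve {i : ℕ} (hi : 1 ≤ i) (hid : i < d) (t : ℝ) :
    phi d (idZeroCurve d i t) = t ^ 6 - 2 * t ^ 3 + i := by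
  set δ : Fin d → ℝ := fun a => if (a : ℕ) < d - i then 1 else if (a : ℕ) = d - i then t else 0
    with hδ
  have hterm : ∀ a, δ a ^ 6 - 2 * δ a ^ 3 =
      if (a : ℕ) < d - i then -1 else if (a : ℕ) = d - i then t ^ 6 - 2 * t ^ 3 else 0 := by
    intro a; simp only [hδ]; split_ifs <;> ring
  rw [idZeroCurve_eq_diagonalFn, phi_diagonalFn, sum_congr rfl fun a _ => hterm a,
    sum_fin_ite_lt_ite_eq (by omega), nsmul_eq_mul, Nat.cast_sub hid.le]
  ring

lemma not_isLocalMin_sextic (c : ℝ) : ¬ IsLocalMin (fun t : ℝ => t ^ 6 - 2 * t ^ 3 + c) 0 := by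
  intro hmin
  have hneg : ∀ᶠ t in 𝓝[>] (0 : ℝ), t ^ 6 - 2 * t ^ 3 + c < 0 ^ 6 - 2 * 0 ^ 3 + c := by
    filter_upwards [Ioo_mem_nhdsGT one_pos] with t ⟨ht0, ht1⟩
    have h3 : 0 < t ^ 3 := by positivity
    have h31 : t ^ 3 < 1 := pow_lt_one₀ ht0.le ht1 (by norm_num)
    nlinarith
  obtain ⟨t, hlt, hle⟩ := (hneg.and (nhdsWithin_le_nhds hmin)).exists
  exact hle.not_gt hlt

theorem stmt14_general (d i : ℕ) (hi1 : 1 ≤ i) (hid : i < d) :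
    fderiv ℝ (phi d) (idZero d i) = 0 ∧
    phi d (idZero d i) = i ∧
    (∀ t : ℝ, phi d (idZeroCurve d i t) = t ^ 6 - 2 * t ^ 3 + i) ∧
    ¬ IsLocalMin (phi d) (idZero d i) := by
  have hcurve := phi_idZeroCurve hi1 hid
  refine ⟨?_, by simpa [idZeroCurve_zero] using hcurve 0, hcurve, fun hmin => ?_⟩
  · rw [← idZeroCurve_zero, idZeroCurve_eq_diagonalFn]
    exact fderiv_phi_eq_zero (phiGrad_diagonalFn_eq_zero fun a => by split_ifs <;> simp)
  · rw [← idZeroCurve_zero] at hmin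
    have hcomp := hmin.comp_continuous (continuous_idZeroCurve d i).continuousAt
    rw [show phi d ∘ idZeroCurve d i = _ from funext hcurve] at hcomp
    exact not_isLocalMin_sextic i hcomp

theorem stmt14 (d i : ℕ) (hd : 2 ≤ d) (hi1 : 1 ≤ i) (hid : i < d) :
    fderiv ℝ (phi d) (idZero d i) = 0 ∧
    phi d (idZero d i) = i ∧
    (∀ t : ℝ, phi d (idZeroCurve d i t) = t ^ 6 - 2 * t ^ 3 + i) ∧
    ¬ IsLocalMin (phi d) (idZero d i) :=
  stmt14_general d i hi1 hid
end

section
/- Let T ∈ (ℝ^d)^{⊗n} be a symmetric tensor and (w,λ) an eigenpair of T, i.e., T w^{n-1} = λw with w ≠ 0 and λ/⟨w,w⟩^{n-1} > 0. Set t = (λ/⟨w,w⟩^{n-1})^{1/n} and let W_t ∈ M(k,d) be the matrix with first row tw and all other rows zero. Then W_t is a critical point of φ(W) = ‖∑ᵢ wᵢ^{⊗n} − T‖²_F, i.e., ∇φ(W_t) = 0. -/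
open Finset

lemma prodEraseZero {m : ℕ} (f : Fin (m + 1) → ℝ) :
    ∏ r ∈ (univ : Finset (Fin (m + 1))).erase 0, f r = ∏ s : Fin m, f s.succ := by
  rw [Fin.univ_succ, Finset.erase_cons, Finset.prod_map]
  rfl

lemma sumProdSq {m d : ℕ} (w : Fin d → ℝ) :
    ∑ idx' : Fin m → Fin d, (∏ s, w (idx' s)) * (∏ s, w (idx' s))
      = (∑ i, w i * w i) ^ m := by
  have h1 : (∑ i, w i * w i) ^ m = ∏ _s : Fin m, (∑ i, w i * w i) := by
    rw [Finset.prod_const, card_univ, Fintype.card_fin]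
  rw [h1, Fintype.prod_sum (fun (_ : Fin m) (a : Fin d) => w a * w a)]
  exact Finset.sum_congr rfl fun idx' _ => (Finset.prod_mul_distrib).symm

lemma tpow_key {m : ℕ} (D lam t : ℝ) (hpos : 0 < lam / D ^ m)
    (ht : t = (lam / D ^ m) ^ ((1:ℝ) / (m + 1))) :
    t ^ (m + 1) * D ^ m = lam := by
  have hDm : D ^ m ≠ 0 := by
    intro h; rw [h, div_zero] at hpos; exact lt_irrefl 0 hpos
  have hc : (0:ℝ) ≤ lam / D ^ m := hpos.le
  have h2 : t ^ (m + 1) = lam / D ^ m := by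
    rw [ht, ← Real.rpow_natCast ((lam / D ^ m) ^ ((1:ℝ) / (m + 1))) (m + 1),
      ← Real.rpow_mul hc]
    rw [show (1:ℝ) / (m + 1) * ((m + 1 : ℕ) : ℝ) = 1 by
      push_cast; field_simp]
    exact Real.rpow_one _
  rw [h2, div_mul_cancel₀ _ hDm]

noncomputable def phiT (K d m : ℕ) (T : (Fin (m + 1) → Fin d) → ℝ)
    (W : Fin (K + 1) → Fin d → ℝ) : ℝ :=
  ∑ idx : Fin (m + 1) → Fin d, ((∑ i, ∏ r, W i (idx r)) - T idx) ^ 2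

theorem stmt17 (K d m : ℕ) (hm : 1 ≤ m)
    (T : (Fin (m + 1) → Fin d) → ℝ)
    (hsym : ∀ (σ : Equiv.Perm (Fin (m + 1))) (idx : Fin (m + 1) → Fin d),
      T (idx ∘ σ) = T idx)
    (w : Fin d → ℝ) (hw : w ≠ 0) (lam : ℝ)
    (heig : ∀ a : Fin d,
      (∑ idx : Fin m → Fin d, T (Fin.cons a idx) * ∏ r, w (idx r)) = lam * w a)
    (hpos : 0 < lam / (∑ i, w i * w i) ^ m)
    (t : ℝ) (ht : t = (lam / (∑ i, w i * w i) ^ m) ^ ((1:ℝ) / (m + 1))) :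
    fderiv ℝ (phiT K d m T)
      (fun i j => if i = 0 then t * w j else 0) = 0 := by
  set W₀ : Fin (K + 1) → Fin d → ℝ := fun i j => if i = 0 then t * w j else 0 with hW₀
  set P : Fin (K + 1) → Fin d → ((Fin (K + 1) → Fin d → ℝ) →L[ℝ] ℝ) :=
    fun i j => (ContinuousLinearMap.proj j).comp
      (ContinuousLinearMap.proj (R := ℝ) (φ := fun _ : Fin (K + 1) => Fin d → ℝ) i) with hP
  set Dm : ((Fin (m + 1) → Fin d)) → ((Fin (K + 1) → Fin d → ℝ) →L[ℝ] ℝ) :=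
    fun idx => ∑ i, ∑ r, (∏ r' ∈ univ.erase r, W₀ i (idx r')) • P i (idx r) with hDm
  set g0 : (Fin (m + 1) → Fin d) → ℝ :=
    fun idx => (∑ i, ∏ r, W₀ i (idx r)) - T idx with hg0
  have h1 : ∀ (i : Fin (K + 1)) (idx : Fin (m + 1) → Fin d),
      HasFDerivAt (fun W : Fin (K + 1) → Fin d → ℝ => ∏ r, W i (idx r))
        (∑ r, (∏ r' ∈ univ.erase r, W₀ i (idx r')) • P i (idx r)) W₀ := by
    intro i idx
    exact HasFDerivAt.finset_prod (fun r _ => by exact (P i (idx r)).hasFDerivAt)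
  have h2 : ∀ idx : Fin (m + 1) → Fin d,
      HasFDerivAt (fun W : Fin (K + 1) → Fin d → ℝ => (∑ i, ∏ r, W i (idx r)) - T idx)
        (Dm idx) W₀ := by
    intro idx
    exact (HasFDerivAt.fun_sum (fun i _ => h1 i idx)).sub_const (T idx)
  have h4 : HasFDerivAt (phiT K d m T)
      (∑ idx : Fin (m + 1) → Fin d, (g0 idx • Dm idx + g0 idx • Dm idx)) W₀ := by
    have heq : phiT K d m T = fun W => ∑ idx : Fin (m + 1) → Fin d,
        ((∑ i, ∏ r, W i (idx r)) - T idx) * ((∑ i, ∏ r, W i (idx r)) - T idx) := by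
      funext W; unfold phiT; exact Finset.sum_congr rfl fun _ _ => sq _
    rw [heq]
    exact HasFDerivAt.fun_sum (fun idx _ => (h2 idx).mul (h2 idx))
  rw [h4.fderiv]
  apply ContinuousLinearMap.ext
  intro v
  simp only [ContinuousLinearMap.sum_apply, ContinuousLinearMap.add_apply,
    ContinuousLinearMap.smul_apply, ContinuousLinearMap.zero_apply, hDm,
    ContinuousLinearMap.coe_comp', Function.comp, ContinuousLinearMap.proj_apply,
    smul_eq_mul, hP]
  -- key scalar identity
  have hDpow : t ^ (m + 1) * (∑ i, w i * w i) ^ m = lam :=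
    tpow_key _ lam t hpos ht
  -- the basic vanishing sums
  set F : Fin (m + 1) → (Fin (m + 1) → Fin d) → ℝ :=
    fun r idx => (t ^ (m + 1) * ∏ s, w (idx s) - T idx) *
      ((∏ r' ∈ univ.erase r, w (idx r')) * v 0 (idx r)) with hF
  have main0 : ∑ idx : Fin (m + 1) → Fin d, F 0 idx = 0 := by
    rw [← Equiv.sum_comp (Fin.consEquiv fun _ : Fin (m + 1) => Fin d) (F 0)]
    rw [Fintype.sum_prod_type]
    refine Finset.sum_eq_zero fun a _ => ?_
    have hterm : ∀ idx' : Fin m → Fin d,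
        F 0 ((Fin.consEquiv fun _ : Fin (m + 1) => Fin d) (a, idx')) =
        t ^ (m + 1) * w a * v 0 a * ((∏ s, w (idx' s)) * (∏ s, w (idx' s)))
          - (T (Fin.cons a idx') * ∏ s, w (idx' s)) * v 0 a := by
      intro idx'
      have h1 : ∏ s : Fin (m + 1), w ((Fin.cons a idx' : Fin (m + 1) → Fin d) s)
          = w a * ∏ s : Fin m, w (idx' s) := by
        rw [Fin.prod_univ_succ]; simp
      have h2 : ∏ r' ∈ (univ : Finset (Fin (m + 1))).erase 0,
          w ((Fin.cons a idx' : Fin (m + 1) → Fin d) r') = ∏ s : Fin m, w (idx' s) := by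
        rw [prodEraseZero]; simp
      show F 0 (Fin.cons a idx') = _
      rw [hF]
      simp only
      rw [h1, h2, Fin.cons_zero]; ring
    rw [Finset.sum_congr rfl fun idx' _ => hterm idx', Finset.sum_sub_distrib,
      ← Finset.mul_sum, sumProdSq, ← Finset.sum_mul, heig a]
    linear_combination (w a * v 0 a) * hDpow
  have main : ∀ r : Fin (m + 1), ∑ idx : Fin (m + 1) → Fin d, F r idx = 0 := by
    intro r
    have hσσ : ∀ s, Equiv.swap (0 : Fin (m + 1)) r (Equiv.swap (0 : Fin (m + 1)) r s) = s :=
      fun s => Equiv.swap_apply_self 0 r s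
    set e : (Fin (m + 1) → Fin d) ≃ (Fin (m + 1) → Fin d) :=
      { toFun := fun idx => idx ∘ (Equiv.swap (0 : Fin (m + 1)) r)
        invFun := fun idx => idx ∘ (Equiv.swap (0 : Fin (m + 1)) r)
        left_inv := fun idx => funext fun s => congrArg idx (hσσ s)
        right_inv := fun idx => funext fun s => congrArg idx (hσσ s) } with he
    have hco : ∀ idx : Fin (m + 1) → Fin d, F r (e idx) = F 0 idx := by
      intro idx
      have hprod : ∏ s : Fin (m + 1), w (idx (Equiv.swap (0 : Fin (m + 1)) r s))
          = ∏ s, w (idx s) := Equiv.prod_comp _ fun s => w (idx s)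
      have hT : T (idx ∘ (Equiv.swap (0 : Fin (m + 1)) r)) = T idx :=
        hsym (Equiv.swap 0 r) idx
      have himg : ((univ : Finset (Fin (m + 1))).erase r).image
          (Equiv.swap (0 : Fin (m + 1)) r) = univ.erase 0 := by
        rw [Finset.image_erase (Equiv.swap (0 : Fin (m + 1)) r).injective,
          Finset.image_univ_equiv, Equiv.swap_apply_right]
      have herase : ∏ r' ∈ (univ : Finset (Fin (m + 1))).erase r,
          w (idx (Equiv.swap (0 : Fin (m + 1)) r r'))
          = ∏ r' ∈ (univ : Finset (Fin (m + 1))).erase 0, w (idx r') := by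
        rw [← himg, Finset.prod_image
          (fun x _ y _ h => (Equiv.swap (0 : Fin (m + 1)) r).injective h)]
      show F r (idx ∘ (Equiv.swap (0 : Fin (m + 1)) r)) = F 0 idx
      rw [hF]
      simp only [Function.comp]
      rw [hprod, herase, Equiv.swap_apply_right]
      rw [hT]
    calc ∑ idx : Fin (m + 1) → Fin d, F r idx
        = ∑ idx : Fin (m + 1) → Fin d, F r (e idx) := (Equiv.sum_comp e (F r)).symm
      _ = ∑ idx : Fin (m + 1) → Fin d, F 0 idx :=
          Finset.sum_congr rfl fun idx _ => hco idx
      _ = 0 := main0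
  -- evaluate g0 at W₀
  have hg0val : ∀ idx : Fin (m + 1) → Fin d,
      g0 idx = t ^ (m + 1) * ∏ s, w (idx s) - T idx := by
    intro idx
    have hs : ∑ i, ∏ r, W₀ i (idx r) = t ^ (m + 1) * ∏ s, w (idx s) := by
      rw [Fintype.sum_eq_single (0 : Fin (K + 1))]
      · have h0 : ∀ r, W₀ 0 (idx r) = t * w (idx r) := fun r => by simp [hW₀]
        rw [Finset.prod_congr rfl fun r _ => h0 r, Finset.prod_mul_distrib,
          Finset.prod_const, card_univ, Fintype.card_fin]
      · intro i hi
        exact Finset.prod_eq_zero (mem_univ 0) (by simp [hW₀, hi])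
    rw [hg0]
    simp only
    rw [hs]
  -- evaluate the inner double sums
  have hinner : ∀ idx : Fin (m + 1) → Fin d,
      (∑ i, ∑ r, (∏ r' ∈ univ.erase r, W₀ i (idx r')) * v i (idx r))
        = ∑ r, t ^ m * ((∏ r' ∈ univ.erase r, w (idx r')) * v 0 (idx r)) := by
    intro idx
    rw [Fintype.sum_eq_single (0 : Fin (K + 1))]
    · refine Finset.sum_congr rfl fun r _ => ?_
      have h2 : ∏ r' ∈ univ.erase r, W₀ 0 (idx r')
          = t ^ m * ∏ r' ∈ univ.erase r, w (idx r') := by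
        have h0 : ∀ r' ∈ univ.erase r, W₀ 0 (idx r') = t * w (idx r') :=
          fun r' _ => by simp [hW₀]
        rw [Finset.prod_congr rfl h0, Finset.prod_mul_distrib, Finset.prod_const,
          Finset.card_erase_of_mem (mem_univ r), card_univ, Fintype.card_fin]
        norm_num
      rw [h2]; ring
    · intro i hi
      refine Finset.sum_eq_zero fun r _ => ?_
      have hne : ((univ : Finset (Fin (m + 1))).erase r).Nonempty := by
        rw [← Finset.card_pos, Finset.card_erase_of_mem (mem_univ r), card_univ,
          Fintype.card_fin]
        omega
      obtain ⟨r', hr'⟩ := hne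
      rw [Finset.prod_eq_zero hr' (by simp [hW₀, hi]), zero_mul]
  -- assemble
  have hterm : ∀ idx : Fin (m + 1) → Fin d,
      g0 idx * (∑ i, ∑ r, (∏ r' ∈ univ.erase r, W₀ i (idx r')) * v i (idx r))
        + g0 idx * (∑ i, ∑ r, (∏ r' ∈ univ.erase r, W₀ i (idx r')) * v i (idx r))
      = ∑ r, (2 * t ^ m) * F r idx := by
    intro idx
    rw [hg0val idx, hinner idx, ← two_mul, Finset.mul_sum, Finset.mul_sum]
    exact Finset.sum_congr rfl fun r _ => by rw [hF]; ring
  rw [Finset.sum_congr rfl fun idx _ => hterm idx, Finset.sum_comm]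
  refine Finset.sum_eq_zero fun r _ => ?_
  rw [← Finset.mul_sum, main r, mul_zero]
end
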